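/- arXiv:1611.01346 — 2 statements merged into one kernel-verified Lean document; each statement's English description precedes it below -/
import Mathlib

section
/- Let m > 1 and γ a permutation of (F_2)^m with γ(0)=0. If some component function of γ is affine (i.e. the nonlinearity of γ is 0), then γ is not strongly 1-anti-invariant: there exist proper subspaces U, W of (F_2)^m of dimension m-1 with γ(U) = W. -/
/-!
Normalising the affine component with `γ 0 = 0` makes it linear: `v ⬝ᵥ γ x = a ⬝ᵥ x`.
Hence `x` lies in the hyperplane `a^⊥` exactly when `γ x` lies in `v^⊥`, and as `γ` is a bijection
it maps `a^⊥` onto `v^⊥`; here `a ≠ 0` because `γ` is onto and `v ≠ 0`.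
-/

open Matrix Module

theorem Equiv.image_preimage_of_comp_eq {α β γ : Type*} (e : α ≃ β) {f : α → γ} {g : β → γ}
    (h : g ∘ e = f) (s : Set γ) : e '' (f ⁻¹' s) = g ⁻¹' s := by
  rw [← h, Set.preimage_comp, e.image_preimage]

theorem Matrix.finrank_ker_dotProductEquiv {K n : Type*} [Field K] [Fintype n] [DecidableEq n]
    {v : n → K} (hv : v ≠ 0) :
    finrank K (LinearMap.ker (dotProductEquiv K n v)) = Fintype.card n - 1 := by
  have h := Dual.finrank_ker_add_one_of_ne_zero
    ((LinearEquiv.map_ne_zero_iff (dotProductEquiv K n)).mpr hv)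
  rw [finrank_fintype_fun_eq_card] at h
  omega

theorem stmt_15_general (m : ℕ) (γ : Equiv.Perm (Fin m → ZMod 2))
    (h0 : γ 0 = 0)
    (haff : ∃ v : Fin m → ZMod 2, v ≠ 0 ∧ ∃ (a : Fin m → ZMod 2) (c : ZMod 2),
      ∀ x : Fin m → ZMod 2, ∑ i, v i * γ x i = (∑ i, a i * x i) + c) :
    ∃ U W : Submodule (ZMod 2) (Fin m → ZMod 2),
      Module.finrank (ZMod 2) U = m - 1 ∧ Module.finrank (ZMod 2) W = m - 1 ∧
      (fun x => γ x) '' (U : Set (Fin m → ZMod 2)) = W := by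
  obtain ⟨v, hv, a, c, hvac⟩ := haff
  have hc : c = 0 := by simpa [h0] using (hvac 0).symm
  have hlin : (v ⬝ᵥ ·) ∘ γ = (a ⬝ᵥ ·) := by
    ext x
    simpa [hc, dotProduct] using hvac x
  have ha : a ≠ 0 := by
    rintro rfl
    refine hv (dotProduct_eq_zero v fun y => ?_)
    simpa using congr_fun hlin (γ.symm y)
  refine ⟨LinearMap.ker (dotProductEquiv _ _ a), LinearMap.ker (dotProductEquiv _ _ v),
    by simpa using finrank_ker_dotProductEquiv ha, by simpa using finrank_ker_dotProductEquiv hv,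
    ?_⟩
  exact γ.image_preimage_of_comp_eq hlin {0}

theorem stmt_15 (m : ℕ) (hm : 1 < m) (γ : Equiv.Perm (Fin m → ZMod 2))
    (h0 : γ 0 = 0)
    (haff : ∃ v : Fin m → ZMod 2, v ≠ 0 ∧ ∃ (a : Fin m → ZMod 2) (c : ZMod 2),
      ∀ x : Fin m → ZMod 2, ∑ i, v i * γ x i = (∑ i, a i * x i) + c) :
    ∃ U W : Submodule (ZMod 2) (Fin m → ZMod 2),
      Module.finrank (ZMod 2) U = m - 1 ∧ Module.finrank (ZMod 2) W = m - 1 ∧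
      (fun x => γ x) '' (U : Set (Fin m → ZMod 2)) = W :=
  stmt_15_general m γ h0 haff
end

section
/- Let γ_j be a permutation of (F_2)^m that is differentially 2^r-uniform (1 < r < m) and strongly (r-1)-anti-invariant, and suppose U, W are subspaces of (F_2)^m with γ_j(U) = W, U nontrivial and proper, and for all nonzero u ∈ U and all v ∈ (F_2)^m, γ_j(u+v) + γ_j(v) ∈ W. Then a contradiction follows; i.e., no such pair (U, W) exists. -/
/-!
Fix a nonzero `u ∈ U`. The derivative `v ↦ γ (u + v) + γ v` takes values in `W`, never vanishes
because `γ` is injective and we are in characteristic two, and by differential `2 ^ r`-uniformity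
each value is taken at most `2 ^ r` times. Hence `2 ^ m ≤ 2 ^ r * (|W| - 1)`, which forces
`dim W ≥ m - r + 1`. Strong anti-invariance, applied to `γ(U) = W` with `U` proper, says the opposite.
-/

open Finset

section CharTwo

variable {V : Type*} [AddCommGroup V] [Module (ZMod 2) V]

theorem ZModTwo.add_self_eq_zero (x : V) : x + x = 0 := by
  rw [← two_smul (ZMod 2), show (2 : ZMod 2) = 0 from rfl, zero_smul]

theorem ZModTwo.eq_of_add_eq_zero {x y : V} (h : x + y = 0) : x = y := by
  rw [← add_zero x, ← add_self_eq_zero y, ← add_assoc, h, zero_add]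

theorem Equiv.Perm.add_apply_add_ne_zero (γ : Equiv.Perm V) {u : V} (hu : u ≠ 0) (v : V) :
    γ (u + v) + γ v ≠ 0 := fun h =>
  hu (by simpa using γ.injective (ZModTwo.eq_of_add_eq_zero h))

variable [Fintype V] [DecidableEq V]

theorem natCard_le_mul_natCard_sub_one_of_add_apply_add_mem (γ : Equiv.Perm V) {k : ℕ} {u : V}
    (hu : u ≠ 0) (huniform : ∀ w, #{x | γ (x + u) + γ x = w} ≤ k)
    (W : Submodule (ZMod 2) V) (hW : ∀ v, γ (u + v) + γ v ∈ W) :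
    Nat.card V ≤ k * (Nat.card W - 1) := by
  classical
  set nonzeroW : Finset V := ({x | x ∈ W} : Finset V).erase 0
  have hmaps : ∀ v ∈ (univ : Finset V), γ (u + v) + γ v ∈ nonzeroW :=
    fun v _ => mem_erase.2 ⟨γ.add_apply_add_ne_zero hu v, mem_filter.2 ⟨mem_univ _, hW v⟩⟩
  have hfibres : ∀ w ∈ nonzeroW, #{v | γ (u + v) + γ v = w} ≤ k := fun w _ => by
    simpa only [add_comm u] using huniform w
  have hcard : #nonzeroW = Nat.card W - 1 := by
    rw [card_erase_of_mem (by simp), Nat.card_eq_fintype_card, Fintype.card_subtype]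
  simpa [hcard] using card_le_mul_card_image_of_maps_to hmaps k hfibres

end CharTwo

theorem pow_mul_pow_sub_one_lt_pow {b : ℕ} (hb : 0 < b) {m r d : ℕ} (hd : d ≤ m - r) :
    b ^ r * (b ^ d - 1) < b ^ m := by
  rcases Nat.eq_zero_or_pos d with rfl | hd0
  · simp [Nat.pow_pos hb]
  · calc b ^ r * (b ^ d - 1) < b ^ r * b ^ d :=
          Nat.mul_lt_mul_of_pos_left (Nat.sub_lt (Nat.pow_pos hb) one_pos)
            (Nat.pow_pos hb)
      _ = b ^ (r + d) := (pow_add b r d).symm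
      _ ≤ b ^ m := Nat.pow_le_pow_right hb (by omega)

theorem stmt_18_general (m r : ℕ)
    (γ : Equiv.Perm (Fin m → ZMod 2))
    (huniform : ∀ u : Fin m → ZMod 2, u ≠ 0 → ∀ v : Fin m → ZMod 2,
      (Finset.univ.filter (fun x => γ (x + u) + γ x = v)).card ≤ 2 ^ r)
    (hanti : ∀ U W : Submodule (ZMod 2) (Fin m → ZMod 2),
      (fun x => γ x) '' (U : Set (Fin m → ZMod 2)) = W →
      (Module.finrank (ZMod 2) U = Module.finrank (ZMod 2) W ∧
        Module.finrank (ZMod 2) U < m - r + 1) ∨ (U = ⊤ ∧ W = ⊤))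
    (U W : Submodule (ZMod 2) (Fin m → ZMod 2))
    (hUbot : U ≠ ⊥) (hUtop : U ≠ ⊤)
    (hγU : (fun x => γ x) '' (U : Set (Fin m → ZMod 2)) = W)
    (hder : ∀ u ∈ U, u ≠ 0 → ∀ v : Fin m → ZMod 2, γ (u + v) + γ v ∈ W) :
    False := by
  have hdimW : Module.finrank (ZMod 2) W ≤ m - r := by
    rcases hanti U W hγU with ⟨hdim, hlt⟩ | ⟨hU, -⟩
    · omega
    · exact absurd hU hUtop
  obtain ⟨u, huU, hu0⟩ := Submodule.exists_mem_ne_zero_of_ne_bot hUbot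
  have hcount := natCard_le_mul_natCard_sub_one_of_add_apply_add_mem γ hu0 (huniform u hu0) W
    (hder u huU hu0)
  rw [Module.natCard_eq_pow_finrank (K := ZMod 2) (V := W),
    Module.natCard_eq_pow_finrank (K := ZMod 2),
    Module.finrank_fin_fun, Nat.card_zmod] at hcount
  exact absurd hcount (not_le.2 (pow_mul_pow_sub_one_lt_pow two_pos hdimW))

theorem stmt_18 (m r : ℕ) (hr1 : 1 < r) (hrm : r < m)
    (γ : Equiv.Perm (Fin m → ZMod 2))
    (huniform : ∀ u : Fin m → ZMod 2, u ≠ 0 → ∀ v : Fin m → ZMod 2,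
      (Finset.univ.filter (fun x => γ (x + u) + γ x = v)).card ≤ 2 ^ r)
    (hanti : ∀ U W : Submodule (ZMod 2) (Fin m → ZMod 2),
      (fun x => γ x) '' (U : Set (Fin m → ZMod 2)) = W →
      (Module.finrank (ZMod 2) U = Module.finrank (ZMod 2) W ∧
        Module.finrank (ZMod 2) U < m - r + 1) ∨ (U = ⊤ ∧ W = ⊤))
    (U W : Submodule (ZMod 2) (Fin m → ZMod 2))
    (hUbot : U ≠ ⊥) (hUtop : U ≠ ⊤)
    (hγU : (fun x => γ x) '' (U : Set (Fin m → ZMod 2)) = W)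
    (hder : ∀ u ∈ U, u ≠ 0 → ∀ v : Fin m → ZMod 2, γ (u + v) + γ v ∈ W) :
    False :=
  stmt_18_general m r γ huniform hanti U W hUbot hUtop hγU hder
end
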